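/- arXiv:2603.01709 — 2 statements merged into one kernel-verified Lean document; each statement's English description precedes it below -/
import Mathlib

section
/- Let z(t) solve the extended SAV system d/dt (z, r) = S̃(z) ∇H̃(z, r), where S̃(z) = B(z)ᵀ S B(z) with B(z) = [I a(z)], a(z) = ∇V(z)/(2√(V(z)+C)), and H̃(z,r) = ½ zᵀ M z + r² − C. If S is skew-symmetric, then H̃(z(t), r(t)) is constant in t; if the symmetric part of S is negative semidefinite, then H̃(z(t), r(t)) is nonincreasing in t. -/
open Matrix

noncomputable def dotCLM {n : ℕ} (g : Fin n → ℝ) : (Fin n → ℝ) →L[ℝ] ℝ :=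
  ∑ i, g i • ContinuousLinearMap.proj i

noncomputable def symPart {m : Type*} [Fintype m] (A : Matrix m m ℝ) : Matrix m m ℝ :=
  (1/2 : ℝ) • (A + Aᵀ)

def NegSemidef {m : Type*} [Fintype m] (A : Matrix m m ℝ) : Prop :=
  Aᵀ = A ∧ ∀ x : m → ℝ, x ⬝ᵥ A.mulVec x ≤ 0

noncomputable def savA {n : ℕ} (gradV : (Fin n → ℝ) → (Fin n → ℝ)) (V : (Fin n → ℝ) → ℝ)
    (C : ℝ) (z : Fin n → ℝ) : Fin n → ℝ :=
  (2 * Real.sqrt (V z + C))⁻¹ • gradV z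

/-- `B(z) = [I a(z)]` -/
noncomputable def savB {n : ℕ} (gradV : (Fin n → ℝ) → (Fin n → ℝ)) (V : (Fin n → ℝ) → ℝ)
    (C : ℝ) (z : Fin n → ℝ) : Matrix (Fin n) (Fin n ⊕ Unit) ℝ :=
  Matrix.fromCols 1 (Matrix.replicateCol Unit (savA gradV V C z))

/-- the SAV extended structure matrix `S̃(z) = B(z)ᵀ S B(z)` -/
noncomputable def savS {n : ℕ} (S : Matrix (Fin n) (Fin n) ℝ)
    (gradV : (Fin n → ℝ) → (Fin n → ℝ)) (V : (Fin n → ℝ) → ℝ)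
    (C : ℝ) (z : Fin n → ℝ) : Matrix (Fin n ⊕ Unit) (Fin n ⊕ Unit) ℝ :=
  (savB gradV V C z)ᵀ * S * savB gradV V C z

/-- the extended SAV energy `H̃(z, r) = ½ zᵀ M z + r² − C` -/
noncomputable def savH {n : ℕ} (M : Matrix (Fin n) (Fin n) ℝ) (C : ℝ)
    (z : Fin n → ℝ) (r : ℝ) : ℝ :=
  (1/2 : ℝ) * (z ⬝ᵥ M.mulVec z) + r ^ 2 - C

/-! Along a trajectory, `dH̃/dt = ∇H̃ ⬝ S̃ ∇H̃ = x ⬝ S x` with `x = B(z) ∇H̃(z, r)`, because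
`S̃ = Bᵀ S B`. This quadratic form vanishes when `S` is skew-symmetric, and it coincides with the
quadratic form of the symmetric part of `S`, so it is nonpositive when that part is negative
semidefinite. -/

section QuadraticForm

variable {m : Type*} [Fintype m]

lemma dotProduct_transpose_mulVec_self (A : Matrix m m ℝ) (x : m → ℝ) :
    x ⬝ᵥ Aᵀ *ᵥ x = x ⬝ᵥ A *ᵥ x := by
  rw [mulVec_transpose, dotProduct_comm, dotProduct_mulVec]

lemma dotProduct_mulVec_self_eq_zero_of_transpose_eq_neg {A : Matrix m m ℝ} (hA : Aᵀ = -A)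
    (x : m → ℝ) : x ⬝ᵥ A *ᵥ x = 0 := by
  have h := dotProduct_transpose_mulVec_self A x
  rw [hA, neg_mulVec, dotProduct_neg] at h
  linarith

lemma dotProduct_symPart_mulVec_self (A : Matrix m m ℝ) (x : m → ℝ) :
    x ⬝ᵥ symPart A *ᵥ x = x ⬝ᵥ A *ᵥ x := by
  rw [symPart, smul_mulVec, add_mulVec, dotProduct_smul, dotProduct_add,
    dotProduct_transpose_mulVec_self, smul_eq_mul]
  ring

lemma dotProduct_transpose_mul_mul_mulVec {R k : Type*} [CommSemiring R] [Fintype k]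
    (B : Matrix m k R) (A : Matrix m m R) (g : k → R) :
    g ⬝ᵥ (Bᵀ * A * B) *ᵥ g = (B *ᵥ g) ⬝ᵥ A *ᵥ (B *ᵥ g) := by
  rw [← mulVec_mulVec, ← mulVec_mulVec, dotProduct_mulVec, vecMul_transpose]

end QuadraticForm

section Deriv

variable {m : Type*} [Fintype m] {x y : ℝ → m → ℝ} {x' y' : m → ℝ} {t : ℝ}

theorem HasDerivAt.dotProduct (hx : HasDerivAt x x' t) (hy : HasDerivAt y y' t) :
    HasDerivAt (fun s => x s ⬝ᵥ y s) (x' ⬝ᵥ y t + x t ⬝ᵥ y') t := by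
  simpa only [_root_.dotProduct, Finset.sum_add_distrib] using
    HasDerivAt.fun_sum (u := Finset.univ) fun i _ =>
      (hasDerivAt_pi.1 hx i).fun_mul (hasDerivAt_pi.1 hy i)

theorem HasDerivAt.mulVec {k : Type*} [Fintype k] (A : Matrix k m ℝ) (hx : HasDerivAt x x' t) :
    HasDerivAt (fun s => A *ᵥ x s) (A *ᵥ x') t :=
  (LinearMap.toContinuousLinearMap A.mulVecLin).hasFDerivAt.comp_hasDerivAt t hx

theorem HasDerivAt.dotProduct_mulVec_self {A : Matrix m m ℝ} (hA : Aᵀ = A)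
    (hx : HasDerivAt x x' t) :
    HasDerivAt (fun s => x s ⬝ᵥ A *ᵥ x s) (2 * (A *ᵥ x t ⬝ᵥ x')) t := by
  convert hx.dotProduct (hx.mulVec A) using 1
  rw [dotProduct_comm x', dotProduct_mulVec, ← mulVec_transpose, hA]
  ring

end Deriv

/-- `∇H̃(z, r)` -/
noncomputable def savGradH {n : ℕ} (M : Matrix (Fin n) (Fin n) ℝ) (z : Fin n → ℝ) (r : ℝ) :
    Fin n ⊕ Unit → ℝ :=
  Sum.elim (M *ᵥ z) (fun _ => 2 * r)

theorem hasDerivAt_savH {n : ℕ} {M : Matrix (Fin n) (Fin n) ℝ} (hM : Mᵀ = M) (C : ℝ)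
    {z : ℝ → Fin n → ℝ} {r : ℝ → ℝ} {w : Fin n ⊕ Unit → ℝ} {t : ℝ}
    (h : HasDerivAt (fun t => (Sum.elim (z t) (fun _ => r t) : Fin n ⊕ Unit → ℝ)) w t) :
    HasDerivAt (fun t => savH M C (z t) (r t)) (savGradH M (z t) (r t) ⬝ᵥ w) t := by
  have hz : HasDerivAt z (fun i => w (Sum.inl i)) t :=
    hasDerivAt_pi.2 fun i => hasDerivAt_pi.1 h (Sum.inl i)
  have hr : HasDerivAt r (w (Sum.inr ())) t := hasDerivAt_pi.1 h (Sum.inr ())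
  refine ((((hz.dotProduct_mulVec_self hM).const_mul (1 / 2)).add (hr.fun_pow 2)).sub_const
    C).congr_deriv ?_
  simp only [savGradH, dotProduct, Fintype.sum_sum_type, Sum.elim_inl, Sum.elim_inr,
    Finset.univ_unique, Finset.sum_singleton]
  ring

theorem stmt4_general {n : ℕ} (S M : Matrix (Fin n) (Fin n) ℝ) (hM : Mᵀ = M)
    (V : (Fin n → ℝ) → ℝ) (gradV : (Fin n → ℝ) → (Fin n → ℝ))
    (C : ℝ)
    (z : ℝ → (Fin n → ℝ)) (r : ℝ → ℝ)
    (hODE : ∀ t, HasDerivAt (fun t => (Sum.elim (z t) (fun _ => r t) : (Fin n ⊕ Unit) → ℝ))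
      ((savS S gradV V C (z t)).mulVec
        (Sum.elim (M.mulVec (z t)) (fun _ => 2 * r t))) t) :
    (Sᵀ = -S → ∀ s t : ℝ, savH M C (z s) (r s) = savH M C (z t) (r t))
    ∧ (NegSemidef (symPart S) →
        ∀ s t : ℝ, s ≤ t → savH M C (z t) (r t) ≤ savH M C (z s) (r s)) := by
  set x : ℝ → Fin n → ℝ := fun t => savB gradV V C (z t) *ᵥ savGradH M (z t) (r t)
  have hH : ∀ t, HasDerivAt (fun t => savH M C (z t) (r t)) (x t ⬝ᵥ S *ᵥ x t) t := fun t =>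
    (hasDerivAt_savH hM C (hODE t)).congr_deriv (dotProduct_transpose_mul_mul_mulVec _ _ _)
  have hdiff : Differentiable ℝ (fun t => savH M C (z t) (r t)) :=
    fun t => (hH t).differentiableAt
  refine ⟨fun hS => is_const_of_deriv_eq_zero hdiff fun t => ?_,
    fun hS _ _ hst => antitone_of_deriv_nonpos hdiff (fun t => ?_) hst⟩
  · rw [(hH t).deriv, dotProduct_mulVec_self_eq_zero_of_transpose_eq_neg hS]
  · rw [(hH t).deriv, ← dotProduct_symPart_mulVec_self]
    exact hS.2 (x t)

/-- along solutions of the extended SAV system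
`d/dt (z,r) = S̃(z) ∇H̃(z,r)`, the extended energy `H̃` is constant if `S` is
skew-symmetric, and nonincreasing if the symmetric part of `S` is negative
semidefinite. -/
theorem stmt4 {n : ℕ} (S M : Matrix (Fin n) (Fin n) ℝ) (hM : Mᵀ = M)
    (V : (Fin n → ℝ) → ℝ) (gradV : (Fin n → ℝ) → (Fin n → ℝ))
    (hV : ∀ z, HasFDerivAt V (dotCLM (gradV z)) z)
    (C : ℝ) (hC : ∀ z, V z + C > 0)
    (z : ℝ → (Fin n → ℝ)) (r : ℝ → ℝ)
    (hODE : ∀ t, HasDerivAt (fun t => (Sum.elim (z t) (fun _ => r t) : (Fin n ⊕ Unit) → ℝ))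
      ((savS S gradV V C (z t)).mulVec
        (Sum.elim (M.mulVec (z t)) (fun _ => 2 * r t))) t) :
    (Sᵀ = -S → ∀ s t : ℝ, savH M C (z s) (r s) = savH M C (z t) (r t))
    ∧ (NegSemidef (symPart S) →
        ∀ s t : ℝ, s ≤ t → savH M C (z t) (r t) ≤ savH M C (z s) (r s)) :=
  stmt4_general S M hM V gradV C z r hODE
end

section
/- Let M ∈ ℝ^{n×n} be symmetric, S ∈ ℝ^{n×n}, h > 0, and set E = exp(h S M) and B(h) = Eᵀ M E − M. If S is skew-symmetric, then B(h) = 0. If the symmetric part of S is negative semidefinite, then B(h) is negative semidefinite. -/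
open Matrix

/-! With `F t = exp(tA)ᵀ M exp(tA)` one has `F' t = exp(tA)ᵀ (AᵀM + MA) exp(tA)`, and for
`A = SM` with `M` symmetric the Lyapunov term is `AᵀM + MA = M (Sᵀ + S) M`. Hence `F` is constant
when `S` is skew, and the quadratic forms `xᵀ F(t) x` decrease in `t` when `Sᵀ + S ≤ 0`. -/

namespace Matrix

open scoped Norms.Operator

variable {m : Type*} [Fintype m]

theorem dotProduct_mulVec_transpose_mul_mul (B C : Matrix m m ℝ) (x : m → ℝ) :
    x ⬝ᵥ (Bᵀ * C * B) *ᵥ x = B *ᵥ x ⬝ᵥ C *ᵥ (B *ᵥ x) := by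
  rw [← mulVec_mulVec, ← mulVec_mulVec, dotProduct_mulVec, vecMul_transpose]

theorem transpose_mul_mul_add_mul_mul {M : Matrix m m ℝ} (S : Matrix m m ℝ) (hM : Mᵀ = M) :
    (S * M)ᵀ * M + M * (S * M) = Mᵀ * (Sᵀ + S) * M := by
  rw [transpose_mul, hM, Matrix.mul_add, Matrix.add_mul, Matrix.mul_assoc, Matrix.mul_assoc]

theorem hasDerivAt_dotProduct_mulVec {F : ℝ → Matrix m m ℝ} {F' : Matrix m m ℝ} {t : ℝ}
    (hF : HasDerivAt F F' t) (x : m → ℝ) :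
    HasDerivAt (fun t => x ⬝ᵥ F t *ᵥ x) (x ⬝ᵥ F' *ᵥ x) t :=
  let L : Matrix m m ℝ →ₗ[ℝ] ℝ :=
    { toFun := fun N => x ⬝ᵥ N *ᵥ x
      map_add' := fun _ _ => by simp only [add_mulVec, dotProduct_add]
      map_smul' := fun _ _ => by simp only [smul_mulVec, dotProduct_smul, RingHom.id_apply] }
  L.toContinuousLinearMap.hasFDerivAt.comp_hasDerivAt t hF

variable [DecidableEq m]

theorem hasDerivAt_exp_transpose_mul_mul_exp (A M : Matrix m m ℝ) (t : ℝ) :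
    HasDerivAt (fun t : ℝ => (NormedSpace.exp (t • A))ᵀ * M * NormedSpace.exp (t • A))
      ((NormedSpace.exp (t • A))ᵀ * (Aᵀ * M + M * A) * NormedSpace.exp (t • A)) t := by
  simp_rw [← exp_transpose, transpose_smul]
  refine (((hasDerivAt_exp_smul_const Aᵀ t).mul_const M).mul
    (hasDerivAt_exp_smul_const' A t)).congr_deriv ?_
  simp only [Matrix.mul_add, Matrix.add_mul, Matrix.mul_assoc]
  rfl -- the two sums use different (defeq) additive structures on matrices

theorem exp_transpose_mul_mul_exp_eq_self {A M : Matrix m m ℝ} (hA : Aᵀ * M + M * A = 0)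
    (t : ℝ) : (NormedSpace.exp (t • A))ᵀ * M * NormedSpace.exp (t • A) = M := by
  have hderiv := hasDerivAt_exp_transpose_mul_mul_exp A M
  simp only [hA, Matrix.mul_zero, Matrix.zero_mul] at hderiv
  simpa using is_const_of_deriv_eq_zero (fun s => (hderiv s).differentiableAt)
    (fun s => (hderiv s).deriv) t 0

theorem dotProduct_mulVec_exp_transpose_mul_mul_exp_le {A M : Matrix m m ℝ}
    (hA : ∀ y, y ⬝ᵥ (Aᵀ * M + M * A) *ᵥ y ≤ 0) {t : ℝ} (ht : 0 ≤ t) (x : m → ℝ) :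
    x ⬝ᵥ ((NormedSpace.exp (t • A))ᵀ * M * NormedSpace.exp (t • A)) *ᵥ x ≤ x ⬝ᵥ M *ᵥ x := by
  have hderiv s := hasDerivAt_dotProduct_mulVec (hasDerivAt_exp_transpose_mul_mul_exp A M s) x
  have hanti : Antitone fun s : ℝ =>
      x ⬝ᵥ ((NormedSpace.exp (s • A))ᵀ * M * NormedSpace.exp (s • A)) *ᵥ x :=
    antitone_of_deriv_nonpos (fun s => (hderiv s).differentiableAt) fun s => by
      rw [(hderiv s).deriv, dotProduct_mulVec_transpose_mul_mul]
      exact hA _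
  simpa using hanti ht

end Matrix

/-- with `E = exp(hSM)` and `B(h) = EᵀME − M` (`M` symmetric, `h > 0`):
if `S` is skew-symmetric then `B(h) = 0`; if the symmetric part of `S` is negative
semidefinite then `B(h)` is negative semidefinite. -/
theorem stmt7 {n : ℕ} (M S : Matrix (Fin n) (Fin n) ℝ) (hM : Mᵀ = M)
    (h : ℝ) (hh : 0 < h) :
    (Sᵀ = -S →
      (NormedSpace.exp (h • (S * M)))ᵀ * M * NormedSpace.exp (h • (S * M)) - M = 0)
    ∧ (NegSemidef (symPart S) →
      NegSemidef
        ((NormedSpace.exp (h • (S * M)))ᵀ * M * NormedSpace.exp (h • (S * M)) - M)) := by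
  have hLyap := transpose_mul_mul_add_mul_mul S hM
  refine ⟨fun hskew => ?_, fun hneg => ⟨?_, fun x => ?_⟩⟩
  · rw [exp_transpose_mul_mul_exp_eq_self (by rw [hLyap, hskew, neg_add_cancel,
      Matrix.mul_zero, Matrix.zero_mul]), sub_self]
  · simp [transpose_mul, hM, Matrix.mul_assoc]
  · rw [sub_mulVec, dotProduct_sub, sub_nonpos]
    refine dotProduct_mulVec_exp_transpose_mul_mul_exp_le (fun y => ?_) hh.le x
    have hsym : Sᵀ + S = (2 : ℝ) • symPart S := by
      rw [symPart, smul_smul]; norm_num; abel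
    rw [hLyap, dotProduct_mulVec_transpose_mul_mul, hsym, smul_mulVec, dotProduct_smul, smul_eq_mul]
    linarith [hneg.2 (M *ᵥ y)]
end
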